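/- arXiv:2502.05876 — 2 statements merged into one kernel-verified Lean document; each statement's English description precedes it below -/
import Mathlib

section
/- Let β₁ be the unique positive root of √(1-e^{-β})·arctanh(√(1-e^{-β})) = 1, and let η(β) = √2·arctanh(√(1-e^{-β})), w(x) = log(1-tanh²(x/√2)). Then the function β ↦ η(β)·w'(η(β)) + 2 is strictly decreasing in β > 0, positive for 0 < β < β₁, zero at β = β₁, and negative for β > β₁. -/
/-!
Since `w x = -2 log cosh (x / √2)`, we have `w' x = -√2 tanh (x / √2)`, and `η(β) / √2` is the
artanh of `s = √(1 - e^{-β})`, so `η(β) w'(η(β)) + 2 = 2 - 2 s artanh s`. Both `β ↦ s` and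
`s ↦ s artanh s` are strictly increasing, and the root condition says `s artanh s = 1` at `β₁`.
-/

noncomputable def w (x : ℝ) : ℝ := Real.log (1 - Real.tanh (x / Real.sqrt 2) ^ 2)

noncomputable def artanh (x : ℝ) : ℝ := (1 / 2) * Real.log ((1 + x) / (1 - x))

noncomputable def eta (β : ℝ) : ℝ := Real.sqrt 2 * artanh (Real.sqrt (1 - Real.exp (-β)))

section

open Real Set

lemma one_sub_tanh_sq (x : ℝ) : 1 - tanh x ^ 2 = (cosh x ^ 2)⁻¹ := by
  have hc := cosh_pos x
  rw [tanh_eq_sinh_div_cosh, div_pow]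
  field_simp
  linear_combination cosh_sq_sub_sinh_sq x

lemma w_eq_neg_two_mul_log_cosh (x : ℝ) : w x = -2 * log (cosh (x / √2)) := by
  rw [w, one_sub_tanh_sq, log_inv, log_pow]
  push_cast
  ring

lemma hasDerivAt_w (x : ℝ) : HasDerivAt w (-√2 * tanh (x / √2)) x := by
  have hcosh := cosh_pos (x / √2)
  have hlog : HasDerivAt (fun y ↦ log (cosh (y / √2)))
      (sinh (x / √2) * (1 / √2) / cosh (x / √2)) x :=
    ((hasDerivAt_cosh _).comp x ((hasDerivAt_id x).div_const √2)).log hcosh.ne'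
  rw [funext w_eq_neg_two_mul_log_cosh]
  refine (hlog.const_mul (-2)).congr_deriv ?_
  rw [tanh_eq_sinh_div_cosh]
  field_simp
  linear_combination sinh (x / √2) * sq_sqrt (zero_le_two : (0 : ℝ) ≤ 2)

lemma artanh_eq_real_artanh {x : ℝ} (hx : x ∈ Icc (-1) 1) : _root_.artanh x = Real.artanh x :=
  (artanh_eq_half_log hx).symm

lemma strictMonoOn_mul_artanh : StrictMonoOn (fun x ↦ x * Real.artanh x) (Ico 0 1) := by
  rintro a ⟨ha0, ha1⟩ b ⟨hb0, hb1⟩ hab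
  have hartanh_a := Real.artanh_nonneg ha0
  have hartanh_lt := Real.artanh_lt_artanh (by linarith) hb1 hab
  calc a * Real.artanh a ≤ b * Real.artanh a := by gcongr
    _ < b * Real.artanh b := by gcongr; linarith

-- No sign condition on `β`: for `β ≤ 0` the square root truncates to `0`.
lemma sqrt_one_sub_exp_neg_mem_Ico (β : ℝ) : √(1 - exp (-β)) ∈ Ico 0 1 := by
  refine ⟨sqrt_nonneg _, ?_⟩
  rw [sqrt_lt' one_pos]
  linarith [exp_pos (-β)]

lemma strictMonoOn_sqrt_one_sub_exp_neg : StrictMonoOn (fun β ↦ √(1 - exp (-β))) (Ici 0) := by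
  intro a ha b hb hab
  have ha' : exp (-a) ≤ 1 := exp_le_one_iff.2 (by simpa using ha)
  have hexp : exp (-b) < exp (-a) := exp_lt_exp.2 (by linarith)
  exact sqrt_lt_sqrt (by linarith) (by linarith)

lemma eta_mul_deriv_w_eta_add_two (β : ℝ) :
    eta β * deriv w (eta β) + 2 =
      2 - 2 * (√(1 - exp (-β)) * _root_.artanh √(1 - exp (-β))) := by
  obtain ⟨hs0, hs1⟩ := sqrt_one_sub_exp_neg_mem_Ico β
  have hartanh := artanh_eq_real_artanh ⟨by linarith, hs1.le⟩
  have heta : eta β / √2 = Real.artanh √(1 - exp (-β)) := by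
    rw [eta, hartanh]
    field_simp
  rw [(hasDerivAt_w _).deriv, heta, tanh_artanh ⟨by linarith, hs1⟩, eta, hartanh]
  linear_combination -(√(1 - exp (-β)) * Real.artanh √(1 - exp (-β))) *
    sq_sqrt (zero_le_two : (0 : ℝ) ≤ 2)

lemma strictMonoOn_sqrt_one_sub_exp_neg_mul_artanh :
    StrictMonoOn (fun β ↦ √(1 - exp (-β)) * _root_.artanh √(1 - exp (-β))) (Ici 0) := by
  refine (strictMonoOn_mul_artanh.comp strictMonoOn_sqrt_one_sub_exp_neg
    fun β _ ↦ sqrt_one_sub_exp_neg_mem_Ico β).congr fun β _ ↦ ?_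
  obtain ⟨hs0, hs1⟩ := sqrt_one_sub_exp_neg_mem_Ico β
  simp only [Function.comp_apply, artanh_eq_real_artanh ⟨by linarith, hs1.le⟩]

end

theorem stmt_11 (β₁ : ℝ) (hβ₁ : 0 < β₁)
    (hroot : Real.sqrt (1 - Real.exp (-β₁)) * artanh (Real.sqrt (1 - Real.exp (-β₁))) = 1) :
    StrictAntiOn (fun β : ℝ => eta β * deriv w (eta β) + 2) (Set.Ioi 0) ∧
    (∀ β : ℝ, 0 < β → β < β₁ → 0 < eta β * deriv w (eta β) + 2) ∧
    eta β₁ * deriv w (eta β₁) + 2 = 0 ∧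
    (∀ β : ℝ, β₁ < β → eta β * deriv w (eta β) + 2 < 0) := by
  simp only [eta_mul_deriv_w_eta_add_two]
  have hmono := strictMonoOn_sqrt_one_sub_exp_neg_mul_artanh
  have hβ₁' : β₁ ∈ Set.Ici 0 := hβ₁.le
  refine ⟨fun a ha b hb hab ↦ ?_, fun β hβ hlt ↦ ?_, by rw [hroot]; ring, fun β hlt ↦ ?_⟩
  · linarith [hmono (Set.Ioi_subset_Ici_self ha) (Set.Ioi_subset_Ici_self hb) hab]
  · linarith [hmono (show β ∈ Set.Ici 0 from hβ.le) hβ₁' hlt]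
  · linarith [hmono hβ₁' (show β ∈ Set.Ici 0 from hβ₁.le.trans hlt.le) hlt]
end

section
/- Let 0 < α < 1 and β > 0. For every λ > 0 and every positive even solution u of u'' + λ h(x,α)e^u = 0, u(-1)=u(1)=0, with ‖u‖_∞ = β, one necessarily has λ = Λ(β) and u = U(·;β), where Λ(β) = (1-α)^{-2} e^{-β} η(β)², η(β) = √2·arctanh(√(1-e^{-β})), and U(x;β) = β for |x|<α, U(x;β) = w(η(β)(|x|-α)/(1-α)) + β for α ≤ |x| ≤ 1 with w(x) = log(1-tanh²(x/√2)). -/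
open Set

noncomputable def Lam (α β : ℝ) : ℝ := (1 - α) ^ (-2 : ℤ) * Real.exp (-β) * (eta β) ^ 2

noncomputable def step (α x : ℝ) : ℝ := if |x| < α then 0 else 1

noncomputable def U (α β x : ℝ) : ℝ :=
  if |x| < α then β else w (eta β * (|x| - α) / (1 - α)) + β

def IsSolution (α lam : ℝ) (u : ℝ → ℝ) : Prop :=
  ContinuousOn u (Icc (-1) 1) ∧
  (∀ x ∈ Ioo (-1 : ℝ) 1, DifferentiableAt ℝ u x) ∧
  ContinuousOn (deriv u) (Icc (-1) 1) ∧
  (∀ x ∈ Ioo (-1 : ℝ) 1 \ {-α, α}, DifferentiableAt ℝ (deriv u) x ∧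
    deriv (deriv u) x + lam * step α x * Real.exp (u x) = 0) ∧
  u (-1) = 0 ∧ u 1 = 0

/-
On the plateau `|x| < α` the equation reads `u'' = 0`; since `u` is even, `u'(0) = 0`, so `u`
is constant, equal to `u(0)`, on `[0, α]`, and `u'(α) = 0`. On `[α, 1]` the energy
`u'^2 / 2 + λ e^u` is conserved, so `u ≤ u(α) = u(0)` there, whence `u(0) = ‖u‖_∞ = β`.
With `k = √(λ e^β)`, the function `w (k (x - α)) + β` solves the same initial value problem at
`α`; the system `(u, u')' = (u', -λ e^u)` is Lipschitz on `{u ≤ β}`, so it coincides with `u`.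
The boundary condition `u(1) = 0` finally forces `k (1 - α) = η(β)`, i.e. `λ = Λ(β)`.
-/

namespace Real

theorem hasDerivAt_tanh (x : ℝ) : HasDerivAt tanh (1 - tanh x ^ 2) x := by
  have h : HasDerivAt (fun y => sinh y / cosh y) _ x :=
    (hasDerivAt_sinh x).div (hasDerivAt_cosh x) (cosh_pos x).ne'
  rw [show (fun y => sinh y / cosh y) = tanh from funext fun y => (tanh_eq_sinh_div_cosh y).symm]
    at h
  refine h.congr_deriv ?_
  rw [tanh_eq_sinh_div_cosh]
  field_simp

theorem one_sub_tanh_sq_pos (x : ℝ) : 0 < 1 - tanh x ^ 2 := by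
  linarith [tanh_sq_lt_one x]

theorem tanh_nonneg {x : ℝ} (hx : 0 ≤ x) : 0 ≤ tanh x := by
  rw [tanh_eq_sinh_div_cosh]
  exact div_nonneg (sinh_nonneg_iff.mpr hx) (cosh_pos x).le

end Real

open Real

noncomputable def wDeriv (x : ℝ) : ℝ := -(√2 * tanh (x / √2))

lemma exp_w (x : ℝ) : exp (w x) = 1 - tanh (x / √2) ^ 2 :=
  exp_log (one_sub_tanh_sq_pos _)

lemma w_nonpos (x : ℝ) : w x ≤ 0 :=
  log_nonpos (one_sub_tanh_sq_pos _).le (by nlinarith [sq_nonneg (tanh (x / √2))])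

lemma hasDerivAt_tanh_div_sqrt_two (x : ℝ) :
    HasDerivAt (fun y => tanh (y / √2)) ((1 - tanh (x / √2) ^ 2) / √2) x := by
  have h := (hasDerivAt_tanh (x / √2)).comp x ((hasDerivAt_id' x).div_const √2)
  exact h.congr_deriv (by field_simp)

lemma hasDerivAt_w_s16 (x : ℝ) : HasDerivAt w (wDeriv x) x := by
  have h : HasDerivAt (fun y => log (1 - tanh (y / √2) ^ 2)) _ x :=
    (((hasDerivAt_tanh_div_sqrt_two x).pow 2).const_sub 1).log (one_sub_tanh_sq_pos (x / √2)).ne'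
  refine h.congr_deriv ?_
  have h2 : √2 ^ 2 = 2 := sq_sqrt zero_le_two
  have := one_sub_tanh_sq_pos (x / √2)
  simp only [Pi.pow_apply]
  unfold wDeriv
  field_simp
  linear_combination tanh (x / √2) * h2

lemma hasDerivAt_wDeriv (x : ℝ) : HasDerivAt wDeriv (-exp (w x)) x := by
  have h : HasDerivAt (fun y => -(√2 * tanh (y / √2))) _ x :=
    ((hasDerivAt_tanh_div_sqrt_two x).const_mul √2).neg
  refine h.congr_deriv ?_
  rw [exp_w]
  field_simp

lemma eq_eta_of_w_eq {z β : ℝ} (hz : 0 ≤ z) (h : w z = -β) : z = eta β := by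
  have hsq : tanh (z / √2) ^ 2 = 1 - exp (-β) := by rw [← h, exp_w]; ring
  have htanh : √(1 - exp (-β)) = tanh (z / √2) := by
    rw [← hsq, sqrt_sq (tanh_nonneg (by positivity))]
  have hmem : tanh (z / √2) ∈ Icc (-1) 1 := ⟨(neg_one_lt_tanh _).le, (tanh_lt_one _).le⟩
  rw [eta, htanh, _root_.artanh, ← artanh_eq_half_log hmem, artanh_tanh]
  field_simp

lemma eq_left_of_hasDerivAt_zero {f : ℝ → ℝ} {a b : ℝ} (hf : ContinuousOn f (Icc a b))
    (hf' : ∀ x ∈ Ioo a b, HasDerivAt f 0 x) : ∀ x ∈ Icc a b, f x = f a := by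
  intro x hx
  rcases hx.1.eq_or_lt with rfl | hax
  · rfl
  obtain ⟨c, -, hc⟩ := exists_hasDerivAt_eq_slope f (fun _ => 0) hax
    (hf.mono (Icc_subset_Icc_right hx.2))
    (fun y hy => hf' y ⟨hy.1, hy.2.trans_le hx.2⟩)
  rw [eq_div_iff (sub_ne_zero.mpr hax.ne')] at hc
  linarith

theorem hasDerivWithinAt_Ici_of_hasDerivAt_Ioo {E : Type*} [NormedAddCommGroup E]
    [NormedSpace ℝ E] {f f' : ℝ → E} {a b : ℝ} (hf : ContinuousOn f (Icc a b))
    (hf' : ContinuousOn f' (Icc a b)) (hderiv : ∀ x ∈ Ioo a b, HasDerivAt f (f' x) x) :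
    ∀ x ∈ Ico a b, HasDerivWithinAt f (f' x) (Ici x) x := by
  intro x hx
  rcases hx.1.eq_or_lt with rfl | hax
  · have hab : a < b := hx.2
    refine hasDerivWithinAt_Ici_of_tendsto_deriv (s := Ioo a b)
      (fun y hy => (hderiv y hy).differentiableAt.differentiableWithinAt)
      ((hf a (left_mem_Icc.mpr hab.le)).mono Ioo_subset_Icc_self) (Ioo_mem_nhdsGT hab) ?_
    rw [← nhdsWithin_Ioo_eq_nhdsGT hab]
    have hlim := ((hf' a (left_mem_Icc.mpr hab.le)).mono Ioo_subset_Icc_self).tendsto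
    refine hlim.congr' ?_
    filter_upwards [self_mem_nhdsWithin] with y hy using (hderiv y hy).deriv.symm
  · exact (hderiv x ⟨hax, hx.2⟩).hasDerivWithinAt

lemma lipschitzOnWith_exp_Iic (β : ℝ) : LipschitzOnWith (exp β).toNNReal exp (Iic β) := by
  refine (convex_Iic β).lipschitzOnWith_of_nnnorm_hasDerivWithin_le
    (fun x _ => (hasDerivAt_exp x).hasDerivWithinAt) fun x hx => ?_
  rw [← NNReal.coe_le_coe, coe_nnnorm, norm_of_nonneg (exp_pos x).le,
    coe_toNNReal _ (exp_pos β).le]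
  exact exp_le_exp.mpr hx

noncomputable def bratuField (lam : ℝ) (z : ℝ × ℝ) : ℝ × ℝ := (z.2, -(lam * exp z.1))

lemma exists_lipschitzOnWith_bratuField (lam β : ℝ) :
    ∃ K, LipschitzOnWith K (bratuField lam) {z | z.1 ≤ β} := by
  have hexp : LipschitzOnWith _ (exp ∘ Prod.fst) {z : ℝ × ℝ | z.1 ≤ β} :=
    (lipschitzOnWith_exp_Iic β).comp LipschitzWith.prod_fst.lipschitzOnWith fun z hz => hz
  have h := LipschitzWith.prod_snd.lipschitzOnWith.prodMk
    ((lipschitzWith_smul (-lam)).comp_lipschitzOnWith hexp)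
  refine ⟨max 1 (‖-lam‖₊ * ((exp β).toNNReal * 1)), fun x hx y hy => ?_⟩
  simpa only [bratuField, Function.comp, smul_eq_mul, neg_mul] using h hx hy

/-- `f'' + λ e^f = 0` with `f'` the derivative of `f`, imposed only on the open interval since
`u''` jumps at `±α`; `f` and `f'` are continuous up to the endpoints. -/
structure SolvesBratuOn (lam : ℝ) (f f' : ℝ → ℝ) (a b : ℝ) : Prop where
  continuousOn : ContinuousOn f (Icc a b)
  continuousOn_deriv : ContinuousOn f' (Icc a b)
  hasDerivAt : ∀ x ∈ Ioo a b, HasDerivAt f (f' x) x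
  hasDerivAt_deriv : ∀ x ∈ Ioo a b, HasDerivAt f' (-(lam * exp (f x))) x

namespace SolvesBratuOn

variable {lam a b : ℝ} {f f' g g' : ℝ → ℝ}

theorem energy_eq (h : SolvesBratuOn lam f f' a b) :
    ∀ x ∈ Icc a b, f' x ^ 2 / 2 + lam * exp (f x) = f' a ^ 2 / 2 + lam * exp (f a) := by
  refine eq_left_of_hasDerivAt_zero (((h.continuousOn_deriv.pow 2).div_const 2).add
    (continuousOn_const.mul h.continuousOn.rexp)) fun x hx => ?_
  have hE := (((h.hasDerivAt_deriv x hx).pow 2).div_const 2).add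
    (((h.hasDerivAt x hx).exp).const_mul lam)
  exact hE.congr_deriv (by ring)

theorem le_left_of_deriv_left_eq_zero (hlam : 0 < lam) (h : SolvesBratuOn lam f f' a b)
    (ha : f' a = 0) : ∀ x ∈ Icc a b, f x ≤ f a := by
  intro x hx
  have hE := h.energy_eq x hx
  rw [ha] at hE
  have : lam * exp (f x) ≤ lam * exp (f a) := by nlinarith [sq_nonneg (f' x)]
  exact exp_le_exp.mp (le_of_mul_le_mul_left this hlam)

theorem hasDerivWithinAt_Ici (h : SolvesBratuOn lam f f' a b) :
    ∀ x ∈ Ico a b,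
      HasDerivWithinAt (fun t => (f t, f' t)) (bratuField lam (f x, f' x)) (Ici x) x :=
  hasDerivWithinAt_Ici_of_hasDerivAt_Ioo (h.continuousOn.prodMk h.continuousOn_deriv)
    (h.continuousOn_deriv.prodMk (continuousOn_const.mul h.continuousOn.rexp).neg)
    fun x hx => (h.hasDerivAt x hx).prodMk (h.hasDerivAt_deriv x hx)

theorem eqOn {β : ℝ} (hf : SolvesBratuOn lam f f' a b) (hg : SolvesBratuOn lam g g' a b)
    (hfβ : ∀ x ∈ Icc a b, f x ≤ β) (hgβ : ∀ x ∈ Icc a b, g x ≤ β) (h₀ : f a = g a)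
    (h₀' : f' a = g' a) : EqOn f g (Icc a b) := by
  obtain ⟨K, hK⟩ := exists_lipschitzOnWith_bratuField lam β
  have hpair := ODE_solution_unique_of_mem_Icc_right (v := fun _ => bratuField lam)
    (s := fun _ => {z | z.1 ≤ β}) (fun _ _ => hK)
    (hf.continuousOn.prodMk hf.continuousOn_deriv) hf.hasDerivWithinAt_Ici
    (fun x hx => hfβ x (Ico_subset_Icc_self hx))
    (hg.continuousOn.prodMk hg.continuousOn_deriv) hg.hasDerivWithinAt_Ici
    (fun x hx => hgβ x (Ico_subset_Icc_self hx)) (Prod.ext h₀ h₀')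
  exact fun x hx => congrArg Prod.fst (hpair hx)

end SolvesBratuOn

theorem solvesBratuOn_w {lam β k : ℝ} (hk : k ^ 2 = lam * exp β) (a b : ℝ) :
    SolvesBratuOn lam (fun x => w (k * (x - a)) + β) (fun x => k * wDeriv (k * (x - a))) a b := by
  have hinner (x : ℝ) : HasDerivAt (fun x => k * (x - a)) k x := by
    simpa using ((hasDerivAt_id x).sub_const a).const_mul k
  have hf (x : ℝ) : HasDerivAt (fun x => w (k * (x - a)) + β) (k * wDeriv (k * (x - a))) x :=
    (((hasDerivAt_w_s16 _).comp x (hinner x)).add_const β).congr_deriv (mul_comm _ _)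
  have hf' (x : ℝ) : HasDerivAt (fun x => k * wDeriv (k * (x - a)))
      (-(lam * exp (w (k * (x - a)) + β))) x := by
    refine (((hasDerivAt_wDeriv _).comp x (hinner x)).const_mul k).congr_deriv ?_
    rw [exp_add]
    linear_combination (-exp (w (k * (x - a)))) * hk
  exact ⟨HasDerivAt.continuousOn fun x _ => hf x, HasDerivAt.continuousOn fun x _ => hf' x,
    fun x _ => hf x, fun x _ => hf' x⟩

lemma deriv_zero_of_even {f : ℝ → ℝ} (hf : ∀ x, f (-x) = f x) : deriv f 0 = 0 := by
  have h := deriv_comp_neg (f := f) (x := 0)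
  rw [funext hf, neg_zero] at h
  linarith

lemma apply_abs_of_even {f : ℝ → ℝ} (hf : ∀ x, f (-x) = f x) (x : ℝ) : f |x| = f x := by
  rcases abs_choice x with h | h <;> rw [h]
  exact hf x

lemma le_apply_zero_of_even {f : ℝ → ℝ} (hf : ∀ x, f (-x) = f x) {r : ℝ}
    (h : ∀ x ∈ Icc 0 r, f x ≤ f 0) : ∀ x ∈ Icc (-r) r, f x ≤ f 0 := fun x hx => by
  rw [← apply_abs_of_even hf x]
  exact h |x| ⟨abs_nonneg x, abs_le.mpr hx⟩

lemma eq_of_isGreatest_abs_image {ι : Type*} {u : ι → ℝ} {s : Set ι} {x₀ : ι} {β : ℝ}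
    (hx₀ : x₀ ∈ s) (hmax : ∀ x ∈ s, u x ≤ u x₀) (hnonneg : ∀ x ∈ s, 0 ≤ u x)
    (hβ : IsGreatest ((fun x => |u x|) '' s) β) : u x₀ = β := by
  have hx₀β : IsGreatest ((fun x => |u x|) '' s) (u x₀) := by
    refine ⟨⟨x₀, hx₀, abs_of_nonneg (hnonneg x₀ hx₀)⟩, ?_⟩
    rintro _ ⟨x, hx, rfl⟩
    exact (abs_of_nonneg (hnonneg x hx)).trans_le (hmax x hx)
  exact hx₀β.unique hβ

namespace IsSolution

variable {α lam : ℝ} {u : ℝ → ℝ}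

theorem nonneg (hsol : IsSolution α lam u) (hpos : ∀ x ∈ Ioo (-1 : ℝ) 1, 0 < u x) :
    ∀ x ∈ Icc (-1 : ℝ) 1, 0 ≤ u x := by
  intro x hx
  rcases hx.1.eq_or_lt with rfl | h₁
  · exact hsol.2.2.2.2.1.ge
  rcases hx.2.eq_or_lt with rfl | h₂
  · exact hsol.2.2.2.2.2.ge
  exact (hpos x ⟨h₁, h₂⟩).le

theorem hasDerivAt_deriv (hsol : IsSolution α lam u) {x : ℝ} (hx : x ∈ Ioo (-1) 1)
    (hxα : x ≠ -α ∧ x ≠ α) : HasDerivAt (deriv u) (-(lam * step α x * exp (u x))) x := by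
  obtain ⟨hdiff, hode⟩ := hsol.2.2.2.1 x ⟨hx, by simpa using hxα⟩
  exact hdiff.hasDerivAt.congr_deriv (by linarith)

theorem deriv_eq_zero_and_eq_of_mem_Icc (hsol : IsSolution α lam u) (hα : α ≤ 1)
    (h0 : deriv u 0 = 0) :
    ∀ x ∈ Icc 0 α, deriv u x = 0 ∧ u x = u 0 := by
  have hsub : Icc 0 α ⊆ Icc (-1) 1 := Icc_subset_Icc (by norm_num) hα
  have hmem {x : ℝ} (hx : x ∈ Ioo 0 α) : x ∈ Ioo (-1 : ℝ) 1 :=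
    ⟨by linarith [hx.1], by linarith [hx.2]⟩
  have hderiv : ∀ x ∈ Icc 0 α, deriv u x = 0 := by
    intro x hx
    rw [← h0]
    refine eq_left_of_hasDerivAt_zero (hsol.2.2.1.mono hsub) (fun y hy => ?_) x hx
    have hstep : step α y = 0 := if_pos (by rw [abs_of_pos hy.1]; exact hy.2)
    simpa [hstep] using
      hsol.hasDerivAt_deriv (hmem hy) ⟨by linarith [hy.1, hy.2], hy.2.ne⟩
  refine fun x hx =>
    ⟨hderiv x hx, eq_left_of_hasDerivAt_zero (hsol.1.mono hsub) (fun y hy => ?_) x hx⟩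
  rw [← hderiv y (Ioo_subset_Icc_self hy)]
  exact (hsol.2.1 y (hmem hy)).hasDerivAt

theorem solvesBratuOn (hsol : IsSolution α lam u) (hα : 0 ≤ α) :
    SolvesBratuOn lam u (deriv u) α 1 := by
  have hsub : Icc α 1 ⊆ Icc (-1) 1 := Icc_subset_Icc (by linarith) le_rfl
  have hmem {x : ℝ} (hx : x ∈ Ioo α 1) : x ∈ Ioo (-1 : ℝ) 1 :=
    ⟨by linarith [hx.1], hx.2⟩
  refine ⟨hsol.1.mono hsub, hsol.2.2.1.mono hsub, fun x hx => (hsol.2.1 x (hmem hx)).hasDerivAt,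
    fun x hx => ?_⟩
  have hstep : step α x = 1 := if_neg (by rw [abs_of_pos (by linarith [hx.1])]; exact hx.1.not_gt)
  simpa [hstep] using hsol.hasDerivAt_deriv (hmem hx) ⟨by linarith [hx.1], hx.1.ne'⟩

end IsSolution

theorem stmt_16_general (α β lam : ℝ) (hα : 0 < α ∧ α < 1) (hlam : 0 < lam)
    (u : ℝ → ℝ) (hsol : IsSolution α lam u)
    (hpos : ∀ x ∈ Ioo (-1 : ℝ) 1, 0 < u x)
    (heven : ∀ x : ℝ, u (-x) = u x)
    (hnorm : IsGreatest ((fun x => |u x|) '' Icc (-1 : ℝ) 1) β) :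
    lam = Lam α β ∧ ∀ x ∈ Icc (-1 : ℝ) 1, u x = U α β x := by
  obtain ⟨hα0, hα1⟩ := hα
  have hflat := hsol.deriv_eq_zero_and_eq_of_mem_Icc hα1.le (deriv_zero_of_even heven)
  obtain ⟨hq, huα⟩ := hflat α ⟨hα0.le, le_rfl⟩
  have hbratu := hsol.solvesBratuOn hα0.le
  have hdecay := hbratu.le_left_of_deriv_left_eq_zero hlam hq
  have hu0 : u 0 = β := by
    refine eq_of_isGreatest_abs_image (by norm_num)
      (le_apply_zero_of_even heven fun x hx => ?_) (hsol.nonneg hpos) hnorm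
    rcases le_or_gt x α with h | h
    · exact (hflat x ⟨hx.1, h⟩).2.le
    · exact huα ▸ hdecay x ⟨h.le, hx.2⟩
  set k := √(lam * exp β)
  have hk : k ^ 2 = lam * exp β := sq_sqrt (by positivity)
  have hbranch : EqOn u (fun x => w (k * (x - α)) + β) (Icc α 1) :=
    hbratu.eqOn (β := β) (solvesBratuOn_w hk α 1) (fun x hx => by linarith [hdecay x hx])
      (fun x _ => by linarith [w_nonpos (k * (x - α))]) (by simp [w, huα, hu0])
      (by simp [wDeriv, hq])
  have hkη : k * (1 - α) = eta β := by
    refine eq_eta_of_w_eq (by positivity) ?_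
    have := hbranch (right_mem_Icc.mpr hα1.le)
    rw [hsol.2.2.2.2.2] at this
    linarith
  have h1α : 1 - α ≠ 0 := sub_ne_zero.mpr hα1.ne'
  refine ⟨?_, fun x hx => ?_⟩
  · rw [Lam, ← hkη, mul_pow, hk, exp_neg]
    field_simp
  · rw [← apply_abs_of_even heven x, U]
    split_ifs with h
    · rw [(hflat |x| ⟨abs_nonneg x, h.le⟩).2, hu0]
    · rw [hbranch ⟨not_lt.mp h, abs_le.mpr hx⟩, ← hkη]
      field_simp

theorem stmt_16 (α β lam : ℝ) (hα : 0 < α ∧ α < 1) (hβ : 0 < β) (hlam : 0 < lam)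
    (u : ℝ → ℝ) (hsol : IsSolution α lam u)
    (hpos : ∀ x ∈ Ioo (-1 : ℝ) 1, 0 < u x)
    (heven : ∀ x : ℝ, u (-x) = u x)
    (hnorm : IsGreatest ((fun x => |u x|) '' Icc (-1 : ℝ) 1) β) :
    lam = Lam α β ∧ ∀ x ∈ Icc (-1 : ℝ) 1, u x = U α β x :=
  stmt_16_general α β lam hα hlam u hsol hpos heven hnorm
end
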